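/- The set 𝒞^N of sums A + B, with A an L-CoLT matrix and B a U-CoLT matrix, is closed under the Hadamard product: if M_1 = A_1 + B_1 and M_2 = A_2 + B_2 with A_i L-CoLT and B_i U-CoLT, then M_1 ⊙ M_2 = (A_1 ⊙ A_2) + (B_1 ⊙ B_2) ∈ 𝒞^N. -/

import Mathlib

open Matrix Finset

/-- `A` is an L-CoLT matrix with ratio vector `r` (0-indexed; `r` has `N-1` meaningful
nonzero entries): `A (i+1) j = r i * A i j` for `j ≤ i`, and `A i j = 0` for `i < j`. -/
def IsLCoLT {N : ℕ} (A : Matrix (Fin N) (Fin N) ℝ) (r : ℕ → ℝ) : Prop :=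
  (∀ k, k + 1 < N → r k ≠ 0) ∧
  (∀ i i' j : Fin N, (i' : ℕ) = (i : ℕ) + 1 → (j : ℕ) ≤ (i : ℕ) → A i' j = r i * A i j) ∧
  (∀ i j : Fin N, (i : ℕ) < (j : ℕ) → A i j = 0)

/-- `A` is a U-CoLT matrix with ratio vector `r'` (0-indexed; `r'` has `N-2` meaningful
nonzero entries): `A (i-1) j = r' (i-1) * A i j` for `i < j`, and `A i j = 0` for `j ≤ i`. -/
def IsUCoLT {N : ℕ} (A : Matrix (Fin N) (Fin N) ℝ) (r' : ℕ → ℝ) : Prop :=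
  (∀ k, k + 2 < N → r' k ≠ 0) ∧
  (∀ i i' j : Fin N, (i : ℕ) = (i' : ℕ) + 1 → (i : ℕ) < (j : ℕ) → A i' j = r' i' * A i j) ∧
  (∀ i j : Fin N, (j : ℕ) ≤ (i : ℕ) → A i j = 0)

/-- The set 𝒞^N: sums of an L-CoLT and a U-CoLT matrix. -/
def InCN {N : ℕ} (M : Matrix (Fin N) (Fin N) ℝ) : Prop :=
  ∃ A B : Matrix (Fin N) (Fin N) ℝ,
    (∃ r, IsLCoLT A r) ∧ (∃ r', IsUCoLT B r') ∧ M = A + B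

theorem Matrix.add_hadamard_add_of_hadamard_eq_zero {m n α : Type*}
    [NonUnitalNonAssocSemiring α] {A₁ B₁ A₂ B₂ : Matrix m n α} (h₁ : A₁ ⊙ B₂ = 0)
    (h₂ : B₁ ⊙ A₂ = 0) :
    (A₁ + B₁) ⊙ (A₂ + B₂) = A₁ ⊙ A₂ + B₁ ⊙ B₂ := by
  rw [add_hadamard, hadamard_add, hadamard_add, h₁, h₂, add_zero, zero_add]

section

variable {N : ℕ} {A B : Matrix (Fin N) (Fin N) ℝ} {r s : ℕ → ℝ}

theorem IsLCoLT.hadamard (hA : IsLCoLT A r) (hB : IsLCoLT B s) :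
    IsLCoLT (A ⊙ B) (r * s) := by
  refine ⟨fun k hk => mul_ne_zero (hA.1 k hk) (hB.1 k hk), fun i i' j hi hj => ?_,
    fun i j hij => ?_⟩
  · simp only [hadamard_apply, hA.2.1 i i' j hi hj, hB.2.1 i i' j hi hj, Pi.mul_apply]
    ring
  · rw [hadamard_apply, hA.2.2 i j hij, zero_mul]

theorem IsUCoLT.hadamard (hA : IsUCoLT A r) (hB : IsUCoLT B s) :
    IsUCoLT (A ⊙ B) (r * s) := by
  refine ⟨fun k hk => mul_ne_zero (hA.1 k hk) (hB.1 k hk), fun i i' j hi hj => ?_,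
    fun i j hij => ?_⟩
  · simp only [hadamard_apply, hA.2.1 i i' j hi hj, hB.2.1 i i' j hi hj, Pi.mul_apply]
    ring
  · rw [hadamard_apply, hA.2.2 i j hij, zero_mul]

theorem IsLCoLT.hadamard_eq_zero_of_isUCoLT (hA : IsLCoLT A r) (hB : IsUCoLT B s) :
    A ⊙ B = 0 := by
  ext i j
  rcases lt_or_ge (i : ℕ) j with hij | hji
  · rw [hadamard_apply, hA.2.2 i j hij, zero_mul, Matrix.zero_apply]
  · rw [hadamard_apply, hB.2.2 i j hji, mul_zero, Matrix.zero_apply]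

end

theorem stmt9 {N : ℕ} (A1 B1 A2 B2 : Matrix (Fin N) (Fin N) ℝ)
    (r1 r2 r1' r2' : ℕ → ℝ)
    (h1 : IsLCoLT A1 r1) (h2 : IsLCoLT A2 r2)
    (h1' : IsUCoLT B1 r1') (h2' : IsUCoLT B2 r2') :
    Matrix.hadamard (A1 + B1) (A2 + B2) = Matrix.hadamard A1 A2 + Matrix.hadamard B1 B2 ∧
    InCN (Matrix.hadamard (A1 + B1) (A2 + B2)) := by
  have split : (A1 + B1) ⊙ (A2 + B2) = A1 ⊙ A2 + B1 ⊙ B2 :=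
    add_hadamard_add_of_hadamard_eq_zero (h1.hadamard_eq_zero_of_isUCoLT h2')
      (hadamard_comm B1 A2 ▸ h2.hadamard_eq_zero_of_isUCoLT h1')
  exact ⟨split, _, _, ⟨_, h1.hadamard h2⟩, ⟨_, h1'.hadamard h2'⟩, split⟩
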